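/- arXiv:2504.17215 — 3 statements merged into one kernel-verified Lean document; each statement's English description precedes it below -/
import Mathlib

section
/- Let f be L_f-smooth with ‖∇f‖ ≤ C_f everywhere and inf f = f̄ > −∞, let h ≥ 0 be L_h-smooth, and consider iterates z_{k+1} = z_k + γΔ_k, Δ_k = −∇f(z_k) − λ_k∇h(z_k), where λ_k ≥ 0 satisfies both complementary slackness λ_k(∇h(z_k)ᵀΔ_k + α‖∇h(z_k)‖²) = 0 and feasibility ∇h(z_k)ᵀΔ_k + α‖∇h(z_k)‖² ≤ 0. If 0 < γ ≤ min{α, 1/(L_f + αL_h)} and h(z₀) ≤ α²C₀, then for every K ≥ 1: (1/K)∑_{k=0}^{K−1} ‖Δ_k‖² ≤ 4(f(z₀) + α³C₀ − f̄)/(γK) + 2αC₀/(γL_hK) + 2α²L_hC_f². -/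
/-!
Along the iteration the merit function `Φ = f + (α + 1/(2αL_h)) h` decreases by `γ/4 ‖Δ_k‖²`
up to an error `γα²L_hC_f²/2` per step. Apply the descent lemma to `f` and `h`: complementary
slackness turns `⟪∇f, Δ⟫` into `-‖Δ‖² + λα‖∇h‖²`, feasibility makes `h` drop by `γα‖∇h‖²`,
and on the active set `λ‖∇h‖² = α‖∇h‖² - ⟪∇h, ∇f⟫ ≤ α‖∇h‖² + C_f‖∇h‖`. The extra weight
`1/(2αL_h)` on `h` absorbs the cross term `αC_f‖∇h‖` by Young's inequality, and the step-size
conditions absorb the quadratic terms. Telescoping, with `Φ(z_K) ≥ f̄` and `h(z_0) ≤ α²C₀`,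
gives the bound.
-/

open scoped RealInnerProductSpace

variable {E : Type*} [NormedAddCommGroup E] [InnerProductSpace ℝ E]

theorem HasGradientAt.hasDerivAt_add_smul [CompleteSpace E] {f : E → ℝ} {g x v : E} {t : ℝ}
    (hf : HasGradientAt f g (x + t • v)) :
    HasDerivAt (fun s : ℝ => f (x + s • v)) ⟪g, v⟫ t := by
  have hline : HasDerivAt (fun s : ℝ => x + s • v) v t := by
    simpa using ((hasDerivAt_id t).smul_const v).const_add x
  simpa [InnerProductSpace.toDual_apply_apply, Function.comp_def] using
    hf.hasFDerivAt.comp_hasDerivAt t hline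

section LipschitzGradient

variable {f : E → ℝ} {f' : E → E} {L : ℝ}

theorem inner_sub_le_of_lipschitz (hLip : ∀ x y, ‖f' x - f' y‖ ≤ L * ‖x - y‖)
    (x v : E) {t : ℝ} (ht : 0 ≤ t) :
    ⟪f' (x + t • v) - f' x, v⟫ ≤ L * t * ‖v‖ ^ 2 :=
  calc ⟪f' (x + t • v) - f' x, v⟫ ≤ ‖f' (x + t • v) - f' x‖ * ‖v‖ := real_inner_le_norm _ _
    _ ≤ L * ‖x + t • v - x‖ * ‖v‖ := by gcongr; exact hLip _ _
    _ = L * t * ‖v‖ ^ 2 := by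
      rw [add_sub_cancel_left, norm_smul, Real.norm_of_nonneg ht]; ring

theorem apply_add_le_of_lipschitz_gradient [CompleteSpace E]
    (hf : ∀ x, HasGradientAt f (f' x) x)
    (hLip : ∀ x y, ‖f' x - f' y‖ ≤ L * ‖x - y‖) (x v : E) :
    f (x + v) ≤ f x + ⟪f' x, v⟫ + L / 2 * ‖v‖ ^ 2 := by
  let B : ℝ → ℝ := fun t => f x + t * ⟪f' x, v⟫ + L / 2 * t ^ 2 * ‖v‖ ^ 2
  have hB : ∀ t, HasDerivAt B (⟪f' x, v⟫ + L * t * ‖v‖ ^ 2) t := by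
    intro t
    have : HasDerivAt B (0 + 1 * ⟪f' x, v⟫ + L / 2 * (2 * t ^ 1) * ‖v‖ ^ 2) t :=
      ((hasDerivAt_const t (f x)).add ((hasDerivAt_id t).mul_const ⟪f' x, v⟫)).add
        (((hasDerivAt_pow 2 t).const_mul (L / 2)).mul_const (‖v‖ ^ 2))
    convert this using 1
    ring
  have hF : ∀ t, HasDerivAt (fun s : ℝ => f (x + s • v)) ⟪f' (x + t • v), v⟫ t :=
    fun t => (hf _).hasDerivAt_add_smul
  have key := image_le_of_deriv_right_le_deriv_boundary (a := 0) (b := 1)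
    (fun t _ => (hF t).continuousAt.continuousWithinAt) (fun t _ => (hF t).hasDerivWithinAt)
    (by simp [B]) (fun t _ => (hB t).continuousAt.continuousWithinAt)
    (fun t _ => (hB t).hasDerivWithinAt)
    (fun t ht => by
      have := inner_sub_le_of_lipschitz hLip x v ht.1
      rw [inner_sub_left] at this
      linarith)
    (Set.right_mem_Icc.2 zero_le_one)
  simpa [B] using key

theorem apply_add_smul_le_of_lipschitz_gradient [CompleteSpace E]
    (hf : ∀ x, HasGradientAt f (f' x) x)
    (hLip : ∀ x y, ‖f' x - f' y‖ ≤ L * ‖x - y‖) (x v : E) (γ : ℝ) :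
    f (x + γ • v) ≤ f x + γ * ⟪f' x, v⟫ + L / 2 * γ ^ 2 * ‖v‖ ^ 2 := by
  have := apply_add_le_of_lipschitz_gradient hf hLip x (γ • v)
  rwa [real_inner_smul_right, norm_smul, mul_pow, Real.norm_eq_abs, sq_abs, ← mul_assoc] at this

end LipschitzGradient

section Direction

variable {g n Δ : E} {μ α : ℝ}

theorem inner_eq_of_complementary_slackness (hΔ : Δ = -g - μ • n)
    (hcs : μ * (⟪n, Δ⟫ + α * ‖n‖ ^ 2) = 0) :
    ⟪g, Δ⟫ = -‖Δ‖ ^ 2 + μ * (α * ‖n‖ ^ 2) := by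
  have hg : g = -Δ - μ • n := by rw [hΔ]; abel
  rw [hg, inner_sub_left, inner_neg_left, real_inner_smul_left, real_inner_self_eq_norm_sq]
  linear_combination -hcs

theorem mul_norm_sq_le_of_complementary_slackness {C : ℝ} (hΔ : Δ = -g - μ • n)
    (hcs : μ * (⟪n, Δ⟫ + α * ‖n‖ ^ 2) = 0) (hα : 0 ≤ α) (hg : ‖g‖ ≤ C) :
    μ * ‖n‖ ^ 2 ≤ α * ‖n‖ ^ 2 + C * ‖n‖ := by
  have hC : 0 ≤ C := (norm_nonneg g).trans hg
  rcases mul_eq_zero.1 hcs with hμ | hactive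
  · rw [hμ, zero_mul]; positivity
  · have hinner : ⟪n, Δ⟫ = -⟪n, g⟫ - μ * ‖n‖ ^ 2 := by
      rw [hΔ, inner_sub_right, inner_neg_right, real_inner_smul_right,
        real_inner_self_eq_norm_sq]
    have hcauchy : -(‖n‖ * C) ≤ ⟪n, g⟫ :=
      (neg_le_neg (mul_le_mul_of_nonneg_left hg (norm_nonneg n))).trans
        (neg_le_of_abs_le (abs_real_inner_le_norm n g))
    linarith

end Direction

theorem sum_range_le_sub_add_of_forall_le {a Φ : ℕ → ℝ} {b : ℝ}
    (h : ∀ k, Φ (k + 1) ≤ Φ k - a k + b) (K : ℕ) :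
    ∑ k ∈ Finset.range K, a k ≤ Φ 0 - Φ K + K * b := by
  induction K with
  | zero => simp
  | succ K ih =>
    rw [Finset.sum_range_succ, Nat.cast_succ]
    linarith [h K]

theorem merit_step_le [CompleteSpace E] {f h : E → ℝ} {f' h' : E → E} {Lf Lh Cf α γ μ : ℝ}
    {x Δ : E} (hf : ∀ x, HasGradientAt f (f' x) x)
    (hLf : ∀ x y, ‖f' x - f' y‖ ≤ Lf * ‖x - y‖) (hh : ∀ x, HasGradientAt h (h' x) x)
    (hLh : ∀ x y, ‖h' x - h' y‖ ≤ Lh * ‖x - y‖) (hLh0 : 0 < Lh) (hα : 0 < α) (hγ : 0 < γ)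
    (hγα : γ ≤ α) (hγL : γ * (Lf + α * Lh) ≤ 1) (hCf : ‖f' x‖ ≤ Cf)
    (hΔ : Δ = -f' x - μ • h' x) (hcs : μ * (⟪h' x, Δ⟫ + α * ‖h' x‖ ^ 2) = 0)
    (hfeas : ⟪h' x, Δ⟫ + α * ‖h' x‖ ^ 2 ≤ 0) :
    f (x + γ • Δ) + (α + 1 / (2 * α * Lh)) * h (x + γ • Δ) ≤
      f x + (α + 1 / (2 * α * Lh)) * h x - γ / 4 * ‖Δ‖ ^ 2 + γ / 2 * α ^ 2 * Lh * Cf ^ 2 := by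
  set c := 1 / (2 * α * Lh) with hc
  have hfx := apply_add_smul_le_of_lipschitz_gradient hf hLf x Δ γ
  rw [inner_eq_of_complementary_slackness hΔ hcs] at hfx
  have hhx := apply_add_smul_le_of_lipschitz_gradient hh hLh x Δ γ
  have hmult := mul_norm_sq_le_of_complementary_slackness hΔ hcs hα.le hCf
  have hyoung : α * Cf * ‖h' x‖ ≤ α ^ 2 * Lh * Cf ^ 2 / 2 + c * α * ‖h' x‖ ^ 2 := by
    have hcα : c * α = Lh⁻¹ / 2 := by rw [hc]; field_simp
    have := two_mul_le_add_mul_sq (a := α * Cf) (b := ‖h' x‖) hLh0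
    rw [mul_pow] at this
    rw [hcα]
    linarith
  have hcγ : c * Lh * γ ^ 2 ≤ γ / 2 := by
    rw [hc, div_mul_eq_mul_div, div_mul_eq_mul_div, div_le_div_iff₀ (by positivity) two_pos]
    nlinarith [mul_le_mul_of_nonneg_left hγα (by positivity : 0 ≤ γ * Lh)]
  have hhx' : h (x + γ • Δ) ≤ h x - γ * (α * ‖h' x‖ ^ 2) + Lh / 2 * γ ^ 2 * ‖Δ‖ ^ 2 := by
    linarith [mul_le_mul_of_nonneg_left hfeas hγ.le]
  linarith [mul_le_mul_of_nonneg_left hmult (by positivity : 0 ≤ γ * α),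
    mul_le_mul_of_nonneg_left hyoung hγ.le,
    mul_le_mul_of_nonneg_left hhx' (by positivity : 0 ≤ α + c),
    mul_le_mul_of_nonneg_right hγL (by positivity : 0 ≤ γ * ‖Δ‖ ^ 2),
    mul_le_mul_of_nonneg_right hcγ (sq_nonneg ‖Δ‖)]

theorem stmt6_general (d : ℕ) (f h : EuclideanSpace ℝ (Fin d) → ℝ)
    (f' h' : EuclideanSpace ℝ (Fin d) → EuclideanSpace ℝ (Fin d))
    (z Δ : ℕ → EuclideanSpace ℝ (Fin d)) (lam : ℕ → ℝ)
    (Lf Lh Cf C₀ α γ fbar : ℝ)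
    (hf : ∀ x, HasGradientAt f (f' x) x)
    (hLf : ∀ x y, ‖f' x - f' y‖ ≤ Lf * ‖x - y‖)
    (hCf : ∀ x, ‖f' x‖ ≤ Cf)
    (hbdd : BddBelow (Set.range f)) (hfbar : fbar = ⨅ x, f x)
    (hh : ∀ x, HasGradientAt h (h' x) x)
    (hLh : ∀ x y, ‖h' x - h' y‖ ≤ Lh * ‖x - y‖)
    (hhnn : ∀ x, 0 ≤ h x)
    (hLhpos : 0 < Lh) (hα : 0 < α)
    (hγ : 0 < γ) (hγα : γ ≤ α) (hγL : γ ≤ 1 / (Lf + α * Lh))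
    (hΔ : ∀ k, Δ k = -f' (z k) - lam k • h' (z k))
    (hz : ∀ k, z (k + 1) = z k + γ • Δ k)
    (hcs : ∀ k, lam k * (⟪h' (z k), Δ k⟫ + α * ‖h' (z k)‖ ^ 2) = 0)
    (hfeas : ∀ k, ⟪h' (z k), Δ k⟫ + α * ‖h' (z k)‖ ^ 2 ≤ 0)
    (hinit : h (z 0) ≤ α ^ 2 * C₀) :
    ∀ K : ℕ, 1 ≤ K →
      (1 / (K : ℝ)) * ∑ k ∈ Finset.range K, ‖Δ k‖ ^ 2 ≤
        4 * (f (z 0) + α ^ 3 * C₀ - fbar) / (γ * K) + 2 * α * C₀ / (γ * Lh * K)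
          + 2 * α ^ 2 * Lh * Cf ^ 2 := by
  intro K hK
  have hL : 0 < Lf + α * Lh := one_div_pos.1 (hγ.trans_le hγL)
  have hγL' : γ * (Lf + α * Lh) ≤ 1 := (le_div_iff₀ hL).1 hγL
  set w := α + 1 / (2 * α * Lh) with hw
  have hsum := sum_range_le_sub_add_of_forall_le (a := fun k => γ / 4 * ‖Δ k‖ ^ 2)
    (Φ := fun k => f (z k) + w * h (z k)) (b := γ / 2 * α ^ 2 * Lh * Cf ^ 2)
    (fun k => by
      simpa only [hz k] using merit_step_le hf hLf hh hLh hLhpos hα hγ hγα hγL' (hCf _)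
        (hΔ k) (hcs k) (hfeas k)) K
  have hfK : fbar ≤ f (z K) := hfbar ▸ ciInf_le hbdd (z K)
  have hhK : w * (h (z 0) - h (z K)) ≤ w * (α ^ 2 * C₀) :=
    mul_le_mul_of_nonneg_left (by linarith [hhnn (z K)]) (by positivity)
  have hK0 : (0 : ℝ) < K := by exact_mod_cast hK
  calc 1 / (K : ℝ) * ∑ k ∈ Finset.range K, ‖Δ k‖ ^ 2
      = 4 / (γ * K) * ∑ k ∈ Finset.range K, γ / 4 * ‖Δ k‖ ^ 2 := by
        rw [← Finset.mul_sum]; field_simp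
    _ ≤ 4 / (γ * K) *
          (f (z 0) - fbar + w * (α ^ 2 * C₀) + K * (γ / 2 * α ^ 2 * Lh * Cf ^ 2)) := by
        gcongr; linarith
    _ = _ := by rw [hw]; field_simp; ring

/-- Theorem 1 (first bound): average squared norm of the search directions. -/
theorem stmt6 (d : ℕ) (f h : EuclideanSpace ℝ (Fin d) → ℝ)
    (f' h' : EuclideanSpace ℝ (Fin d) → EuclideanSpace ℝ (Fin d))
    (z Δ : ℕ → EuclideanSpace ℝ (Fin d)) (lam : ℕ → ℝ)
    (Lf Lh Cf C₀ α γ fbar : ℝ)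
    (hf : ∀ x, HasGradientAt f (f' x) x)
    (hLf : ∀ x y, ‖f' x - f' y‖ ≤ Lf * ‖x - y‖)
    (hCf : ∀ x, ‖f' x‖ ≤ Cf)
    (hbdd : BddBelow (Set.range f)) (hfbar : fbar = ⨅ x, f x)
    (hh : ∀ x, HasGradientAt h (h' x) x)
    (hLh : ∀ x y, ‖h' x - h' y‖ ≤ Lh * ‖x - y‖)
    (hhnn : ∀ x, 0 ≤ h x)
    (hLfpos : 0 < Lf) (hLhpos : 0 < Lh) (hα : 0 < α) (hC₀ : 0 < C₀)
    (hγ : 0 < γ) (hγα : γ ≤ α) (hγL : γ ≤ 1 / (Lf + α * Lh))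
    (hΔ : ∀ k, Δ k = -f' (z k) - lam k • h' (z k))
    (hz : ∀ k, z (k + 1) = z k + γ • Δ k)
    (hlamnn : ∀ k, 0 ≤ lam k)
    (hcs : ∀ k, lam k * (⟪h' (z k), Δ k⟫ + α * ‖h' (z k)‖ ^ 2) = 0)
    (hfeas : ∀ k, ⟪h' (z k), Δ k⟫ + α * ‖h' (z k)‖ ^ 2 ≤ 0)
    (hinit : h (z 0) ≤ α ^ 2 * C₀) :
    ∀ K : ℕ, 1 ≤ K →
      (1 / (K : ℝ)) * ∑ k ∈ Finset.range K, ‖Δ k‖ ^ 2 ≤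
        4 * (f (z 0) + α ^ 3 * C₀ - fbar) / (γ * K) + 2 * α * C₀ / (γ * Lh * K)
          + 2 * α ^ 2 * Lh * Cf ^ 2 :=
  stmt6_general d f h f' h' z Δ lam Lf Lh Cf C₀ α γ fbar hf hLf hCf hbdd hfbar hh hLh hhnn hLhpos hα
    hγ hγα hγL hΔ hz hcs hfeas hinit
end

section
/- Under the same setting as the previous bound (f L_f-smooth with gradient bound C_f and infimum f̄, h ≥ 0 L_h-smooth, iterates z_{k+1} = z_k + γΔ_k with Δ_k = −∇f(z_k) − λ_k∇h(z_k), λ_k ≥ 0 satisfying complementary slackness and feasibility with parameter α, stepsize γ ≤ min{α, 1/(L_f + αL_h)}, and initialization h(z₀) ≤ α²C₀), for every K ≥ 1: (1/K)∑_{k=0}^{K−1} ‖∇h(z_k)‖² ≤ 2αC₀/(γK) + 2L_h(f(z₀) + α³C₀ − f̄)/(γK) + α²L_h²C_f². -/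
open scoped RealInnerProductSpace

/-!
Lyapunov argument with `Ψ = 2 h + 2 Lh α (f + α h)`. The descent lemma for `f` and `h` along
the step, combined with feasibility and complementary slackness, gives
`α γ ‖∇h(z_k)‖² ≤ Ψ(z_k) - Ψ(z_{k+1}) + α γ α² Lh² Cf²`: the weights of `Ψ` are chosen so that
the `‖Δ_k‖²` terms have a nonpositive total coefficient once `γ ≤ α` and
`γ (Lf + α Lh) ≤ 1`, and the remaining cross term `⟪∇h, ∇f⟫` is absorbed by Young's inequality.
Telescoping, with `Ψ(z_0) ≤ 2 α² C₀ + 2 Lh α (f(z_0) + α³ C₀)` and `Ψ(z_K) ≥ 2 Lh α f̄`, gives the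
bound.
-/

variable {E : Type*}

def lyapunov (f h : E → ℝ) (Lh α : ℝ) (x : E) : ℝ :=
  2 * h x + 2 * Lh * α * (f x + α * h x)

theorem lyapunov_le {f h : E → ℝ} {Lh α c : ℝ} {x : E} (hLh : 0 ≤ Lh)
    (hx : h x ≤ α ^ 2 * c) :
    lyapunov f h Lh α x ≤ 2 * α ^ 2 * c + 2 * Lh * α * (f x + α ^ 3 * c) := by
  unfold lyapunov
  nlinarith [mul_le_mul_of_nonneg_left hx (by positivity : 0 ≤ 2 + 2 * Lh * α ^ 2)]

theorem le_lyapunov {f h : E → ℝ} {Lh α m : ℝ} {x : E} (hLh : 0 ≤ Lh) (hα : 0 ≤ α)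
    (hm : m ≤ f x) (hx : 0 ≤ h x) : 2 * Lh * α * m ≤ lyapunov f h Lh α x := by
  unfold lyapunov
  nlinarith [mul_le_mul_of_nonneg_left hm (by positivity : 0 ≤ 2 * Lh * α),
    mul_nonneg (by positivity : 0 ≤ 2 + 2 * Lh * α ^ 2) hx]

variable [NormedAddCommGroup E] [InnerProductSpace ℝ E]

theorem descent_lemma [CompleteSpace E] {g : E → ℝ} {g' : E → E} {L : ℝ}
    (hg : ∀ x, HasGradientAt g (g' x) x) (hlip : ∀ x y, ‖g' x - g' y‖ ≤ L * ‖x - y‖)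
    (x y : E) : g y ≤ g x + ⟪g' x, y - x⟫ + L / 2 * ‖y - x‖ ^ 2 := by
  set v := y - x
  -- `φ` is antitone on `[0, ∞)`: its derivative is `⟪g' (x + t • v) - g' x, v⟫ - L t ‖v‖² ≤ 0`.
  let φ : ℝ → ℝ := fun t => g (x + t • v) - t * ⟪g' x, v⟫ - L / 2 * t ^ 2 * ‖v‖ ^ 2
  have hφ : ∀ t, HasDerivAt φ (⟪g' (x + t • v), v⟫ - ⟪g' x, v⟫ - L * t * ‖v‖ ^ 2) t := by
    intro t
    have hline : HasDerivAt (fun s : ℝ => x + s • v) v t := by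
      simpa using ((hasDerivAt_id t).smul_const v).const_add x
    have hgline := (hg (x + t • v)).hasFDerivAt.comp_hasDerivAt t hline
    refine ((hgline.sub ((hasDerivAt_id t).mul_const ⟪g' x, v⟫)).sub
      (((hasDerivAt_pow 2 t).const_mul (L / 2)).mul_const (‖v‖ ^ 2))).congr_deriv ?_
    simp only [InnerProductSpace.toDual_apply_apply, one_mul]
    ring
  have hanti : AntitoneOn φ (Set.Ici 0) := by
    refine antitoneOn_of_hasDerivWithinAt_nonpos (convex_Ici 0)
      (fun t _ => (hφ t).continuousAt.continuousWithinAt) (fun t _ => (hφ t).hasDerivWithinAt) ?_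
    intro t ht
    rw [interior_Ici] at ht
    have hlip_t : ‖g' (x + t • v) - g' x‖ ≤ L * (t * ‖v‖) := by
      simpa [norm_smul, abs_of_pos (Set.mem_Ioi.mp ht)] using hlip (x + t • v) x
    calc ⟪g' (x + t • v), v⟫ - ⟪g' x, v⟫ - L * t * ‖v‖ ^ 2
        = ⟪g' (x + t • v) - g' x, v⟫ - L * t * ‖v‖ ^ 2 := by rw [inner_sub_left]
      _ ≤ ‖g' (x + t • v) - g' x‖ * ‖v‖ - L * t * ‖v‖ ^ 2 := by
        gcongr; exact real_inner_le_norm _ _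
      _ ≤ 0 := by nlinarith [mul_le_mul_of_nonneg_right hlip_t (norm_nonneg v)]
  have hφ01 := hanti Set.self_mem_Ici (Set.mem_Ici.mpr zero_le_one) zero_le_one
  simp only [φ, v, one_smul, zero_smul, add_zero, add_sub_cancel] at hφ01
  linarith

section ComplementarySlackness

variable {u v d : E} {α lam : ℝ}

theorem inner_eq_of_complementary_slackness_s7 (hd : d = -u - lam • v)
    (hcs : lam * (⟪v, d⟫ + α * ‖v‖ ^ 2) = 0) :
    ⟪u, d⟫ = -‖d‖ ^ 2 + α * lam * ‖v‖ ^ 2 := by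
  have hu : u = -d - lam • v := by rw [hd]; module
  rw [hu, inner_sub_left, inner_neg_left, real_inner_smul_left, real_inner_self_eq_norm_sq]
  linear_combination -hcs

theorem mul_norm_sq_le_of_complementary_slackness_s7 (hd : d = -u - lam • v) (hα : 0 ≤ α)
    (hcs : lam * (⟪v, d⟫ + α * ‖v‖ ^ 2) = 0) :
    lam * ‖v‖ ^ 2 ≤ α * ‖v‖ ^ 2 + ‖v‖ * ‖u‖ := by
  rcases mul_eq_zero.mp hcs with hlam | hactive
  · simp only [hlam, zero_mul]; positivity
  · have hvd : ⟪v, d⟫ = -⟪v, u⟫ - lam * ‖v‖ ^ 2 := by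
      rw [hd, inner_sub_right, inner_neg_right, real_inner_smul_right, real_inner_self_eq_norm_sq]
    linarith [neg_abs_le ⟪v, u⟫, abs_real_inner_le_norm v u]

end ComplementarySlackness

theorem lyapunov_step [CompleteSpace E] {f h : E → ℝ} {f' h' : E → E} {Lf Lh Cf α γ lam : ℝ}
    {x Δ : E}
    (hf : ∀ x, HasGradientAt f (f' x) x) (hLf : ∀ x y, ‖f' x - f' y‖ ≤ Lf * ‖x - y‖)
    (hh : ∀ x, HasGradientAt h (h' x) x) (hLh : ∀ x y, ‖h' x - h' y‖ ≤ Lh * ‖x - y‖)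
    (hCf : ‖f' x‖ ≤ Cf) (hLh0 : 0 ≤ Lh) (hα : 0 ≤ α) (hγ : 0 ≤ γ) (hγα : γ ≤ α)
    (hγL : γ * (Lf + α * Lh) ≤ 1) (hΔ : Δ = -f' x - lam • h' x)
    (hcs : lam * (⟪h' x, Δ⟫ + α * ‖h' x‖ ^ 2) = 0) (hfeas : ⟪h' x, Δ⟫ + α * ‖h' x‖ ^ 2 ≤ 0) :
    α * γ * ‖h' x‖ ^ 2 ≤ lyapunov f h Lh α x - lyapunov f h Lh α (x + γ • Δ)
      + α * γ * (α ^ 2 * Lh ^ 2 * Cf ^ 2) := by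
  have hdesc_h := descent_lemma hh hLh x (x + γ • Δ)
  have hdesc_f := descent_lemma hf hLf x (x + γ • Δ)
  simp only [add_sub_cancel_left, real_inner_smul_right, norm_smul, Real.norm_eq_abs, mul_pow,
    sq_abs] at hdesc_h hdesc_f
  rw [inner_eq_of_complementary_slackness_s7 hΔ hcs] at hdesc_f
  have hlam := mul_norm_sq_le_of_complementary_slackness_s7 hΔ hα hcs
  have hCf' : ‖h' x‖ * ‖f' x‖ ≤ ‖h' x‖ * Cf := mul_le_mul_of_nonneg_left hCf (norm_nonneg _)
  have hyoung : 2 * (α * Lh * Cf) * ‖h' x‖ ≤ ‖h' x‖ ^ 2 + (α * Lh * Cf) ^ 2 := by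
    nlinarith [sq_nonneg (‖h' x‖ - α * Lh * Cf)]
  unfold lyapunov
  linarith [mul_le_mul_of_nonneg_left hdesc_h (by positivity : 0 ≤ 2 + 2 * Lh * α ^ 2),
    mul_le_mul_of_nonneg_left hdesc_f (by positivity : 0 ≤ 2 * Lh * α),
    mul_le_mul_of_nonneg_left hfeas (by positivity : 0 ≤ γ * (2 + 2 * Lh * α ^ 2)),
    mul_le_mul_of_nonneg_left hlam (by positivity : 0 ≤ 2 * Lh * α ^ 2 * γ),
    mul_le_mul_of_nonneg_left hCf' (by positivity : 0 ≤ 2 * Lh * α ^ 2 * γ),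
    mul_le_mul_of_nonneg_left hyoung (by positivity : 0 ≤ α * γ),
    mul_nonneg (mul_nonneg (mul_nonneg hLh0 hγ) (sub_nonneg.2 hγα)) (sq_nonneg ‖Δ‖),
    mul_nonneg (mul_nonneg (mul_nonneg (mul_nonneg hLh0 hγ) hα) (sub_nonneg.2 hγL))
      (sq_nonneg ‖Δ‖)]

theorem Finset.sum_range_le_of_le_sub_succ {a Ψ : ℕ → ℝ} {c : ℝ}
    (h : ∀ k, a k ≤ Ψ k - Ψ (k + 1) + c) (n : ℕ) :
    ∑ k ∈ Finset.range n, a k ≤ Ψ 0 - Ψ n + n * c := by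
  calc ∑ k ∈ Finset.range n, a k ≤ ∑ k ∈ Finset.range n, (Ψ k - Ψ (k + 1) + c) :=
        Finset.sum_le_sum fun k _ => h k
    _ = Ψ 0 - Ψ n + n * c := by
        rw [Finset.sum_add_distrib, Finset.sum_range_sub', Finset.sum_const, Finset.card_range,
          nsmul_eq_mul]

theorem stmt7_general (d : ℕ) (f h : EuclideanSpace ℝ (Fin d) → ℝ)
    (f' h' : EuclideanSpace ℝ (Fin d) → EuclideanSpace ℝ (Fin d))
    (z Δ : ℕ → EuclideanSpace ℝ (Fin d)) (lam : ℕ → ℝ)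
    (Lf Lh Cf C₀ α γ fbar : ℝ)
    (hf : ∀ x, HasGradientAt f (f' x) x)
    (hLf : ∀ x y, ‖f' x - f' y‖ ≤ Lf * ‖x - y‖)
    (hCf : ∀ x, ‖f' x‖ ≤ Cf)
    (hbdd : BddBelow (Set.range f)) (hfbar : fbar = ⨅ x, f x)
    (hh : ∀ x, HasGradientAt h (h' x) x)
    (hLh : ∀ x y, ‖h' x - h' y‖ ≤ Lh * ‖x - y‖)
    (hhnn : ∀ x, 0 ≤ h x)
    (hLhpos : 0 < Lh) (hα : 0 < α)
    (hγ : 0 < γ) (hγα : γ ≤ α) (hγL : γ ≤ 1 / (Lf + α * Lh))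
    (hΔ : ∀ k, Δ k = -f' (z k) - lam k • h' (z k))
    (hz : ∀ k, z (k + 1) = z k + γ • Δ k)
    (hcs : ∀ k, lam k * (⟪h' (z k), Δ k⟫ + α * ‖h' (z k)‖ ^ 2) = 0)
    (hfeas : ∀ k, ⟪h' (z k), Δ k⟫ + α * ‖h' (z k)‖ ^ 2 ≤ 0)
    (hinit : h (z 0) ≤ α ^ 2 * C₀) :
    ∀ K : ℕ, 1 ≤ K →
      (1 / (K : ℝ)) * ∑ k ∈ Finset.range K, ‖h' (z k)‖ ^ 2 ≤
        2 * α * C₀ / (γ * K) + 2 * Lh * (f (z 0) + α ^ 3 * C₀ - fbar) / (γ * K)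
          + α ^ 2 * Lh ^ 2 * Cf ^ 2 := by
  intro K hK
  have hγL' : γ * (Lf + α * Lh) ≤ 1 := by
    have hL : 0 < Lf + α * Lh := one_div_pos.mp (hγ.trans_le hγL)
    rwa [le_div_iff₀ hL] at hγL
  have hsum := Finset.sum_range_le_of_le_sub_succ (fun k => hz k ▸ lyapunov_step hf hLf hh hLh
    (hCf (z k)) hLhpos.le hα.le hγ.le hγα hγL' (hΔ k) (hcs k) (hfeas k)) K
  rw [← Finset.mul_sum] at hsum
  have hΨ0 := lyapunov_le (f := f) hLhpos.le hinit
  have hΨK := le_lyapunov (h := h) hLhpos.le hα.le (hfbar ▸ ciInf_le hbdd (z K)) (hhnn (z K))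
  set S := ∑ k ∈ Finset.range K, ‖h' (z k)‖ ^ 2
  set A := 2 * α * C₀ + 2 * Lh * (f (z 0) + α ^ 3 * C₀ - fbar)
  have hK0 : (0 : ℝ) < K := by exact_mod_cast hK
  have hγS : γ * S ≤ A + K * γ * (α ^ 2 * Lh ^ 2 * Cf ^ 2) :=
    le_of_mul_le_mul_left (by linarith) hα
  calc (1 / (K : ℝ)) * S = γ * S / (γ * K) := by field_simp
    _ ≤ (A + K * γ * (α ^ 2 * Lh ^ 2 * Cf ^ 2)) / (γ * K) := by gcongr
    _ = _ := by field_simp; ring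

/-- Theorem 1 (second bound): average squared gradient norm of the constraint function. -/
theorem stmt7 (d : ℕ) (f h : EuclideanSpace ℝ (Fin d) → ℝ)
    (f' h' : EuclideanSpace ℝ (Fin d) → EuclideanSpace ℝ (Fin d))
    (z Δ : ℕ → EuclideanSpace ℝ (Fin d)) (lam : ℕ → ℝ)
    (Lf Lh Cf C₀ α γ fbar : ℝ)
    (hf : ∀ x, HasGradientAt f (f' x) x)
    (hLf : ∀ x y, ‖f' x - f' y‖ ≤ Lf * ‖x - y‖)
    (hCf : ∀ x, ‖f' x‖ ≤ Cf)
    (hbdd : BddBelow (Set.range f)) (hfbar : fbar = ⨅ x, f x)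
    (hh : ∀ x, HasGradientAt h (h' x) x)
    (hLh : ∀ x y, ‖h' x - h' y‖ ≤ Lh * ‖x - y‖)
    (hhnn : ∀ x, 0 ≤ h x)
    (hLfpos : 0 < Lf) (hLhpos : 0 < Lh) (hα : 0 < α) (hC₀ : 0 < C₀)
    (hγ : 0 < γ) (hγα : γ ≤ α) (hγL : γ ≤ 1 / (Lf + α * Lh))
    (hΔ : ∀ k, Δ k = -f' (z k) - lam k • h' (z k))
    (hz : ∀ k, z (k + 1) = z k + γ • Δ k)
    (hlamnn : ∀ k, 0 ≤ lam k)
    (hcs : ∀ k, lam k * (⟪h' (z k), Δ k⟫ + α * ‖h' (z k)‖ ^ 2) = 0)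
    (hfeas : ∀ k, ⟪h' (z k), Δ k⟫ + α * ‖h' (z k)‖ ^ 2 ≤ 0)
    (hinit : h (z 0) ≤ α ^ 2 * C₀) :
    ∀ K : ℕ, 1 ≤ K →
      (1 / (K : ℝ)) * ∑ k ∈ Finset.range K, ‖h' (z k)‖ ^ 2 ≤
        2 * α * C₀ / (γ * K) + 2 * Lh * (f (z 0) + α ^ 3 * C₀ - fbar) / (γ * K)
          + α ^ 2 * Lh ^ 2 * Cf ^ 2 :=
  stmt7_general d f h f' h' z Δ lam Lf Lh Cf C₀ α γ fbar hf hLf hCf hbdd hfbar hh hLh hhnn hLhpos hα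
    hγ hγα hγL hΔ hz hcs hfeas hinit
end

section
/- Suppose (1/K)∑_{k=0}^{K−1}‖Δ_k‖² ≤ A/(γK) + α²B and (1/K)∑_{k=0}^{K−1}h(z_k) ≤ α²C₀ + γ²L_hB²(K−1)/4 for constants A, B, C₀, L_h > 0. If α = K^{−1/6} and γ = min{K^{−2/3}, 1/L_f} with L_f > 0, then both averages are O(K^{−1/3}); consequently, for any ε > 0 there exists t < K with max{h(z_t), ‖Δ_t‖²} ≤ ε once K = O(ε^{−3}). -/
/-!
With `α² = K^{-1/3}`, `γ ≤ K^{-2/3}` and `1/γ ≤ K^{2/3} + L_f`, every term of the two average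
bounds is a constant multiple of `K^{-1/3}` (using `K^{-1} ≤ K^{-1/3}`), which gives one constant
`C`. The average of `h(z_k) + ‖Δ_k‖²` is then at most `2 C K^{-1/3}`, so some single index is,
and `2 C K^{-1/3} ≤ ε` once `K ≥ (2C)³/ε³`.
-/

open Real Finset

lemma rpow_neg_one_sixth_sq {x : ℝ} (hx : 0 ≤ x) :
    (x ^ (-(1 / 6 : ℝ))) ^ 2 = x ^ (-(1 / 3 : ℝ)) := by
  rw [← rpow_natCast, ← rpow_mul hx]
  norm_num

lemma rpow_neg_one_third_pow_three {x : ℝ} (hx : 0 ≤ x) :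
    (x ^ (-(1 / 3 : ℝ))) ^ 3 = x⁻¹ := by
  rw [← rpow_natCast, ← rpow_mul hx, ← rpow_neg_one]
  norm_num

lemma rpow_two_thirds_mul_inv {x : ℝ} (hx : 0 < x) :
    x ^ (2 / 3 : ℝ) * x⁻¹ = x ^ (-(1 / 3 : ℝ)) := by
  rw [← rpow_neg_one, ← rpow_add hx]
  norm_num

lemma rpow_neg_two_thirds_sq_mul {x : ℝ} (hx : 0 < x) :
    (x ^ (-(2 / 3 : ℝ))) ^ 2 * x = x ^ (-(1 / 3 : ℝ)) := by
  rw [← rpow_natCast, ← rpow_mul hx.le, ← rpow_add_one hx.ne']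
  norm_num

lemma inv_min_le_inv_add_inv {a b : ℝ} (ha : 0 ≤ a) (hb : 0 ≤ b) :
    (min a b)⁻¹ ≤ a⁻¹ + b⁻¹ := by
  rcases min_choice a b with h | h <;> rw [h]
  · exact le_add_of_nonneg_right (inv_nonneg.2 hb)
  · exact le_add_of_nonneg_left (inv_nonneg.2 ha)

lemma div_min_stepsize_mul_le {A L x : ℝ} (hA : 0 ≤ A) (hL : 0 < L) (hx : 1 ≤ x) :
    A / (min (x ^ (-(2 / 3 : ℝ))) (1 / L) * x) ≤ (A + A * L) * x ^ (-(1 / 3 : ℝ)) := by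
  have hx0 : 0 < x := one_pos.trans_le hx
  have hinv : (min (x ^ (-(2 / 3 : ℝ))) (1 / L))⁻¹ ≤ x ^ (2 / 3 : ℝ) + L := by
    simpa [rpow_neg hx0.le] using
      inv_min_le_inv_add_inv (rpow_nonneg hx0.le (-(2 / 3 : ℝ))) (one_div_nonneg.2 hL.le)
  have hx_inv : x⁻¹ ≤ x ^ (-(1 / 3 : ℝ)) := by
    rw [← rpow_neg_one]
    exact rpow_le_rpow_of_exponent_le hx (by norm_num)
  calc A / (min (x ^ (-(2 / 3 : ℝ))) (1 / L) * x)
      = A * (min (x ^ (-(2 / 3 : ℝ))) (1 / L))⁻¹ * x⁻¹ := by rw [div_eq_mul_inv, mul_inv, mul_assoc]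
    _ ≤ A * (x ^ (2 / 3 : ℝ) + L) * x⁻¹ := by gcongr
    _ = A * x ^ (-(1 / 3 : ℝ)) + A * L * x⁻¹ := by rw [← rpow_two_thirds_mul_inv hx0]; ring
    _ ≤ (A + A * L) * x ^ (-(1 / 3 : ℝ)) := by
      have := mul_le_mul_of_nonneg_left hx_inv (mul_nonneg hA hL.le)
      linarith

lemma min_stepsize_sq_mul_sub_one_le {L x : ℝ} (hL : 0 < L) (hx : 1 ≤ x) :
    (min (x ^ (-(2 / 3 : ℝ))) (1 / L)) ^ 2 * (x - 1) ≤ x ^ (-(1 / 3 : ℝ)) := by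
  have hx0 : 0 < x := one_pos.trans_le hx
  have hγ : 0 ≤ min (x ^ (-(2 / 3 : ℝ))) (1 / L) :=
    le_min (rpow_nonneg hx0.le _) (one_div_nonneg.2 hL.le)
  rw [← rpow_neg_two_thirds_sq_mul hx0]
  gcongr
  · exact min_le_left _ _
  · linarith

lemma mul_rpow_neg_one_third_le {c ε x : ℝ} (hε : 0 < ε) (hx : 0 < x)
    (hcx : c ^ 3 / ε ^ 3 ≤ x) : c * x ^ (-(1 / 3 : ℝ)) ≤ ε := by
  refine le_of_pow_le_pow_left₀ three_ne_zero hε.le ?_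
  rw [mul_pow, rpow_neg_one_third_pow_three hx.le, ← div_eq_mul_inv, div_le_iff₀ hx]
  rwa [div_le_iff₀ (by positivity), mul_comm] at hcx

lemma exists_max_le_of_average_le {K : ℕ} (hK : 1 ≤ K) {f g : ℕ → ℝ} {u v : ℝ}
    (hf : ∀ k < K, 0 ≤ f k) (hg : ∀ k < K, 0 ≤ g k)
    (hfu : (1 / (K : ℝ)) * ∑ k ∈ range K, f k ≤ u)
    (hgv : (1 / (K : ℝ)) * ∑ k ∈ range K, g k ≤ v) :
    ∃ t < K, max (f t) (g t) ≤ u + v := by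
  have hK0 : (0 : ℝ) < K := by exact_mod_cast hK
  have hsum : ∑ k ∈ range K, (f k + g k) ≤ ∑ _k ∈ range K, (u + v) := by
    rw [sum_add_distrib, sum_const, card_range, nsmul_eq_mul]
    rw [one_div, inv_mul_le_iff₀ hK0] at hfu hgv
    linarith
  obtain ⟨t, ht, hle⟩ := exists_le_of_sum_le (nonempty_range_iff.2 (by omega)) hsum
  have ht' := mem_range.1 ht
  exact ⟨t, ht', max_le (by linarith [hg t ht']) (by linarith [hf t ht'])⟩

lemma averages_le_rpow_neg_one_third {A B C₀ Lh L x Sa Sh : ℝ} (hA : 0 ≤ A) (hB : 0 ≤ B)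
    (hC₀ : 0 ≤ C₀) (hLh : 0 ≤ Lh) (hL : 0 < L) (hx : 1 ≤ x)
    (hSa : Sa ≤ A / (min (x ^ (-(2 / 3 : ℝ))) (1 / L) * x) + (x ^ (-(1 / 6 : ℝ))) ^ 2 * B)
    (hSh : Sh ≤ (x ^ (-(1 / 6 : ℝ))) ^ 2 * C₀ +
      (min (x ^ (-(2 / 3 : ℝ))) (1 / L)) ^ 2 * Lh * B ^ 2 * (x - 1) / 4) :
    Sa ≤ (A + A * L + B + C₀ + Lh * B ^ 2 / 4) * x ^ (-(1 / 3 : ℝ)) ∧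
      Sh ≤ (A + A * L + B + C₀ + Lh * B ^ 2 / 4) * x ^ (-(1 / 3 : ℝ)) := by
  have hx0 : 0 ≤ x := zero_le_one.trans hx
  have hp : 0 ≤ x ^ (-(1 / 3 : ℝ)) := by positivity
  rw [rpow_neg_one_sixth_sq hx0] at hSa hSh
  have hγx := div_min_stepsize_mul_le hA hL hx
  have hγsq := mul_le_mul_of_nonneg_left (min_stepsize_sq_mul_sub_one_le hL hx)
    (by positivity : 0 ≤ Lh * B ^ 2 / 4)
  have hAL := hγx.trans' (by positivity : 0 ≤ A / (min (x ^ (-(2 / 3 : ℝ))) (1 / L) * x))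
  constructor
  · linarith [mul_nonneg hC₀ hp, mul_nonneg (by positivity : 0 ≤ Lh * B ^ 2) hp]
  · linarith [mul_nonneg hB hp]

/-- Rate-extraction lemma formalizing Corollary 3 (no regularity assumption):
with `α = K^{-1/6}` and `γ = min{K^{-2/3}, 1/L_f}`, the Theorem-2-style average
bounds are `O(K^{-1/3})`, hence an ε-approximate iterate within `K = O(ε^{-3})`
iterations. Here, for the run with horizon `K`, `a K k = ‖Δ_k‖²` and
`hs K k = h(z_k)`. -/
theorem stmt19 (a hs : ℕ → ℕ → ℝ) (A B C₀ Lh Lf : ℝ)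
    (hApos : 0 < A) (hBpos : 0 < B) (hC₀ : 0 < C₀) (hLh : 0 < Lh) (hLf : 0 < Lf)
    (hann : ∀ K, ∀ k < K, 0 ≤ a K k) (hhnn : ∀ K, ∀ k < K, 0 ≤ hs K k)
    (hSa : ∀ K : ℕ, 1 ≤ K →
      (1 / (K : ℝ)) * ∑ k ∈ Finset.range K, a K k ≤
        A / (min ((K : ℝ) ^ (-(2 / 3 : ℝ))) (1 / Lf) * K) +
          ((K : ℝ) ^ (-(1 / 6 : ℝ))) ^ 2 * B)
    (hSh : ∀ K : ℕ, 1 ≤ K →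
      (1 / (K : ℝ)) * ∑ k ∈ Finset.range K, hs K k ≤
        ((K : ℝ) ^ (-(1 / 6 : ℝ))) ^ 2 * C₀ +
          (min ((K : ℝ) ^ (-(2 / 3 : ℝ))) (1 / Lf)) ^ 2 * Lh * B ^ 2 * ((K : ℝ) - 1) / 4) :
    ∃ C > 0, ∃ C' > 0,
      (∀ K : ℕ, 1 ≤ K →
        (1 / (K : ℝ)) * ∑ k ∈ Finset.range K, a K k ≤ C * (K : ℝ) ^ (-(1 / 3 : ℝ)) ∧
        (1 / (K : ℝ)) * ∑ k ∈ Finset.range K, hs K k ≤ C * (K : ℝ) ^ (-(1 / 3 : ℝ))) ∧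
      (∀ ε > (0 : ℝ), ∀ K : ℕ, 1 ≤ K → (K : ℝ) ≥ C' / ε ^ 3 →
        ∃ t < K, max (hs K t) (a K t) ≤ ε) := by
  have hrate : ∀ K : ℕ, 1 ≤ K →
      (1 / (K : ℝ)) * ∑ k ∈ range K, a K k ≤
        (A + A * Lf + B + C₀ + Lh * B ^ 2 / 4) * (K : ℝ) ^ (-(1 / 3 : ℝ)) ∧
      (1 / (K : ℝ)) * ∑ k ∈ range K, hs K k ≤
        (A + A * Lf + B + C₀ + Lh * B ^ 2 / 4) * (K : ℝ) ^ (-(1 / 3 : ℝ)) := fun K hK =>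
    averages_le_rpow_neg_one_third hApos.le hBpos.le hC₀.le hLh.le hLf
      (by exact_mod_cast hK) (hSa K hK) (hSh K hK)
  refine ⟨_, by positivity, (2 * (A + A * Lf + B + C₀ + Lh * B ^ 2 / 4)) ^ 3, by positivity,
    hrate, fun ε hε K hK hKε => ?_⟩
  obtain ⟨ha, hh⟩ := hrate K hK
  have hsmall := mul_rpow_neg_one_third_le hε (by exact_mod_cast hK) hKε
  obtain ⟨t, ht, hmax⟩ := exists_max_le_of_average_le hK (hhnn K) (hann K) hh ha
  exact ⟨t, ht, hmax.trans (by linarith)⟩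
end
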